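/- arXiv:1702.08487 — 3 statements merged into one kernel-verified Lean document; each statement's English description precedes it below -/
import Mathlib

section
/- The diagonal of the double generating series $\sum_{i,n\ge 0} x^i t^n a_{in}$, where $a_{in} = \int_{C^{[i]}}(\omega-2)^{n+1-2g}\frac{(1+\omega)^{n-g}}{(1-\omega)^{n+g}}(1-2\omega)^g$, equals the residue at $x_0 = \frac{1}{2}\left(1-\sqrt{1+\frac{8q}{1+q}}\right)$ of $\frac{(1-2x)^g}{(x-2)^{2g-1}(1-x^2)^g}\cdot\frac{-(1-x)}{(1+q)x^2-(1+q)x-2q}$, where $x_0$ is the root of $(1+q)x^2-(1+q)x-2q$ tending to $0$ as $q\to 0$. -/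
open PowerSeries

/-- Integer power `f^e` of a formal power series over `ℚ`, using the power-series inverse
for negative exponents. -/
noncomputable def zpow' (f : PowerSeries ℚ) (e : ℤ) : PowerSeries ℚ :=
  f ^ e.toNat * f⁻¹ ^ (-e).toNat

/-- The integrand `(ω-2)^{n+1-2g} (1+ω)^{n-g} (1-ω)^{-(n+g)} (1-2ω)^g`, a formal power
series in `ω` (here `ω` is the power series variable). -/
noncomputable def vwIntegrand (g n : ℕ) : PowerSeries ℚ :=
  zpow' (PowerSeries.X - 2) ((n : ℤ) + 1 - 2 * (g : ℤ)) *
    zpow' (1 + PowerSeries.X) ((n : ℤ) - (g : ℤ)) *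
    zpow' (1 - PowerSeries.X) (-((n : ℤ) + (g : ℤ))) *
    (1 - 2 * PowerSeries.X) ^ g

/-- `a_{i n} = ∫_{C^[i]} (ω-2)^{n+1-2g} (1+ω)^{n-g}/(1-ω)^{n+g} (1-2ω)^g`:
since `∫_{C^[i]} ω^j = δ_{ij}`, this is the coefficient of `ω^i` in the integrand. -/
noncomputable def aCoef (g i n : ℕ) : ℚ :=
  PowerSeries.coeff i (vwIntegrand g n)

open Finset

namespace DiagRes

noncomputable def ev (y P : PowerSeries ℚ) : PowerSeries ℚ :=
  PowerSeries.mk fun m => PowerSeries.coeff m (Polynomial.eval₂ (C (R := ℚ)) y (trunc (m+1) P))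

theorem coeff_pow_eq_zero {y : PowerSeries ℚ} (hy : constantCoeff y = 0) {m k : ℕ} (h : m < k) :
    coeff m (y ^ k) = 0 := by
  have : (X : PowerSeries ℚ) ^ k ∣ y ^ k := pow_dvd_pow_of_dvd (X_dvd_iff.mpr hy) k
  exact X_pow_dvd_iff.mp this m h

theorem coeff_eval₂ {y : PowerSeries ℚ} (hy : constantCoeff y = 0) (p : Polynomial ℚ) (m : ℕ) :
    coeff m (Polynomial.eval₂ (C (R := ℚ)) y p)
      = ∑ i ∈ range (m+1), p.coeff i * coeff m (y ^ i) := by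
  set N := max (m+1) (p.natDegree + 1) with hN
  have hdeg : p.natDegree < N := lt_of_lt_of_le (Nat.lt_succ_self _) (le_max_right _ _)
  rw [Polynomial.eval₂_eq_sum_range' (C (R := ℚ)) hdeg y, map_sum]
  have : ∀ i ∈ range N, coeff m (C (p.coeff i) * y ^ i) = p.coeff i * coeff m (y ^ i) :=
    fun i _ => coeff_C_mul _ _ _
  rw [Finset.sum_congr rfl this]
  apply (Finset.sum_subset (Finset.range_subset_range.mpr (le_max_left _ _)) _).symm
  intro i _ hi
  rw [coeff_pow_eq_zero hy (by simpa using hi), mul_zero]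

theorem coeff_ev {y : PowerSeries ℚ} (hy : constantCoeff y = 0) (P : PowerSeries ℚ) (m : ℕ) :
    coeff m (ev y P) = ∑ i ∈ range (m+1), coeff i P * coeff m (y ^ i) := by
  rw [ev, coeff_mk, coeff_eval₂ hy]
  refine Finset.sum_congr rfl fun i hi => ?_
  rw [coeff_trunc]
  rw [Finset.mem_range] at hi
  rw [if_pos hi]

section
variable {y : PowerSeries ℚ} (hy : constantCoeff y = 0)
include hy

theorem coeff_ev_le (P : PowerSeries ℚ) {i m : ℕ} (him : i ≤ m) :
    coeff i (ev y P) = ∑ k ∈ range (m+1), coeff k P * coeff i (y ^ k) := by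
  rw [coeff_ev hy]
  apply Finset.sum_subset (by simpa using Nat.succ_le_succ him)
  intro k _ hk
  rw [coeff_pow_eq_zero hy (by simpa using hk), mul_zero]

theorem ev_add (P Q : PowerSeries ℚ) : ev y (P + Q) = ev y P + ev y Q := by
  ext m
  rw [map_add, coeff_ev hy, coeff_ev hy, coeff_ev hy, ← Finset.sum_add_distrib]
  refine Finset.sum_congr rfl fun i _ => by rw [map_add, add_mul]

theorem ev_C (a : ℚ) : ev y (C a) = C a := by
  ext m
  rw [coeff_ev hy, coeff_C]
  rw [Finset.sum_eq_single 0 (fun i _ hi => by rw [coeff_C, if_neg hi, zero_mul])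
    (fun h => absurd (Finset.mem_range.mpr (Nat.succ_pos m)) h)]
  simp [coeff_C, coeff_one, coeff_zero_eq_constantCoeff]

theorem ev_one : ev y 1 = 1 := by
  have := ev_C hy 1
  rwa [map_one] at this

theorem ev_X : ev y X = y := by
  ext m
  rw [coeff_ev hy]
  rcases Nat.eq_zero_or_pos m with hm | hm
  · subst hm
    simp [coeff_X, hy]
  · rw [Finset.sum_eq_single 1]
    · simp
    · intro i _ hi
      rw [coeff_X, if_neg hi, zero_mul]
    · intro h
      exact absurd (Finset.mem_range.mpr (by omega)) h

theorem constantCoeff_ev (P : PowerSeries ℚ) :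
    constantCoeff (ev y P) = constantCoeff P := by
  have h := coeff_ev hy P 0
  simpa using h

theorem ev_mul (P Q : PowerSeries ℚ) : ev y (P * Q) = ev y P * ev y Q := by
  ext m
  set tP := trunc (m+1) P
  set tQ := trunc (m+1) Q
  have h1 : coeff m (ev y (P * Q)) = coeff m (Polynomial.eval₂ (C (R := ℚ)) y (tP * tQ)) := by
    rw [coeff_ev hy, coeff_eval₂ hy]
    refine Finset.sum_congr rfl fun i hi => ?_
    rw [Finset.mem_range] at hi
    congr 1
    have := trunc_trunc_mul_trunc (n := m+1) P Q
    have h2 := congrArg (fun q => Polynomial.coeff q i) this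
    simp only [coeff_trunc, if_pos hi] at h2
    rw [← h2, ← Polynomial.coeff_coe, Polynomial.coe_mul]
  rw [h1, Polynomial.eval₂_mul, PowerSeries.coeff_mul, PowerSeries.coeff_mul]
  refine Finset.sum_congr rfl fun ij hij => ?_
  rw [HasAntidiagonal.mem_antidiagonal] at hij
  have hi : ij.1 ≤ m := by omega
  have hj : ij.2 ≤ m := by omega
  rw [coeff_eval₂ hy, coeff_eval₂ hy, coeff_ev hy P, coeff_ev hy Q]
  congr 1
  · refine Finset.sum_congr rfl fun k hk => ?_
    rw [Finset.mem_range] at hk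
    rw [coeff_trunc, if_pos (by omega)]
  · refine Finset.sum_congr rfl fun k hk => ?_
    rw [Finset.mem_range] at hk
    rw [coeff_trunc, if_pos (by omega)]

theorem ev_pow (P : PowerSeries ℚ) (k : ℕ) : ev y (P ^ k) = ev y P ^ k := by
  induction k with
  | zero => simpa using ev_one hy
  | succ k ih => rw [pow_succ, pow_succ, ev_mul hy, ih]

theorem ev_inv {f : PowerSeries ℚ} (hf : constantCoeff f ≠ 0) :
    ev y f⁻¹ = (ev y f)⁻¹ := by
  have hu : constantCoeff (ev y f) ≠ 0 := by rwa [constantCoeff_ev hy]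
  rw [PowerSeries.eq_inv_iff_mul_eq_one hu, ← ev_mul hy, PowerSeries.inv_mul_cancel f hf,
    ev_one hy]

end

section Core

variable {u : PowerSeries ℚ} (hu : constantCoeff u ≠ 0)

theorem dXu : d⁄dX ℚ (X * u) = u + X * d⁄dX ℚ u := by
  rw [Derivation.leibniz, smul_eq_mul, smul_eq_mul, derivative_X, mul_one, add_comm]

include hu

theorem star (r : ℕ) :
    coeff r (u⁻¹ ^ (r + 1) * d⁄dX ℚ (X * u)) = if r = 0 then 1 else 0 := by
  rcases Nat.eq_zero_or_pos r with hr | hr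
  · subst hr
    rw [if_pos rfl, dXu, pow_one, mul_add, map_add]
    have h2 : coeff 0 (u⁻¹ * (X * d⁄dX ℚ u)) = 0 := by
      rw [coeff_zero_eq_constantCoeff, map_mul, map_mul, constantCoeff_X, zero_mul, mul_zero]
    rw [h2, add_zero, coeff_zero_eq_constantCoeff, map_mul, PowerSeries.constantCoeff_inv,
      inv_mul_cancel₀ hu]
  · rw [if_neg hr.ne', dXu, mul_add, map_add]
    set z := u⁻¹ ^ (r + 1) * d⁄dX ℚ u with hz
    have e1 : u⁻¹ ^ (r + 1) * u = u⁻¹ ^ r := by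
      rw [pow_succ, mul_assoc, PowerSeries.inv_mul_cancel u hu, mul_one]
    have e2 : u⁻¹ ^ (r + 1) * (X * d⁄dX ℚ u) = X * z := by rw [hz]; ring
    rw [e1, e2]
    have hr1 : r - 1 + 1 = r := by omega
    have hrne : (r : ℚ) ≠ 0 := Nat.cast_ne_zero.mpr hr.ne'
    have hd : d⁄dX ℚ (u⁻¹ ^ r) = -(r : ℚ⟦X⟧) * z := by
      rw [Derivation.leibniz_pow, derivative_inv', nsmul_eq_mul, smul_eq_mul, hz,
        show u⁻¹ ^ (r+1) = u⁻¹ ^ 2 * u⁻¹ ^ (r-1) by rw [← pow_add]; congr 1; omega]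
      ring
    have hkey : coeff (r - 1) z = - coeff r (u⁻¹ ^ r) := by
      have h := congrArg (fun f => coeff (r - 1) f) hd
      simp only [coeff_derivative] at h
      rw [hr1, neg_mul, map_neg, ← map_natCast (C (R := ℚ)) r, coeff_C_mul] at h
      refine mul_left_cancel₀ hrne ?_
      rw [show ((r - 1 : ℕ) : ℚ) + 1 = (r : ℚ) by exact_mod_cast congrArg (Nat.cast : ℕ → ℚ) hr1] at h
      linear_combination h
    have hx : coeff r (X * z) = coeff (r - 1) z := by
      conv_lhs => rw [← hr1]
      rw [coeff_succ_X_mul]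
    rw [hx, hkey, add_neg_cancel]


theorem T0 (P : PowerSeries ℚ) (m : ℕ) :
    coeff m (ev (X * u) P * (d⁄dX ℚ (X * u) * u⁻¹ ^ (m + 1))) = coeff m P := by
  have hy : constantCoeff (X * u) = 0 := by rw [map_mul, constantCoeff_X, zero_mul]
  set W := d⁄dX ℚ (X * u) * u⁻¹ ^ (m + 1) with hW
  rw [PowerSeries.coeff_mul]
  have step1 : ∀ p ∈ antidiagonal m, coeff p.1 (ev (X * u) P) * coeff p.2 W
      = ∑ k ∈ range (m + 1), coeff k P * (coeff p.1 ((X * u) ^ k) * coeff p.2 W) := by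
    intro p hp
    rw [HasAntidiagonal.mem_antidiagonal] at hp
    rw [coeff_ev_le hy P (show p.1 ≤ m by omega), Finset.sum_mul]
    exact Finset.sum_congr rfl fun k _ => by ring
  rw [Finset.sum_congr rfl step1, Finset.sum_comm]
  have step2 : ∀ k ∈ range (m + 1),
      ∑ p ∈ antidiagonal m, coeff k P * (coeff p.1 ((X * u) ^ k) * coeff p.2 W)
      = coeff k P * coeff m ((X * u) ^ k * W) := by
    intro k _
    rw [← Finset.mul_sum, PowerSeries.coeff_mul]
  rw [Finset.sum_congr rfl step2]
  have step3 : ∀ k ∈ range (m + 1), coeff m ((X * u) ^ k * W) = if k = m then 1 else 0 := by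
    intro k hk
    rw [mem_range] at hk
    have hk' : k ≤ m := by omega
    have hcancel : u ^ k * u⁻¹ ^ (m + 1) = u⁻¹ ^ ((m - k) + 1) := by
      rw [show m + 1 = k + ((m - k) + 1) by omega, pow_add, ← mul_assoc, ← mul_pow,
        PowerSeries.mul_inv_cancel u hu, one_pow, one_mul]
    have e : (X * u) ^ k * W = X ^ k * (u⁻¹ ^ ((m - k) + 1) * d⁄dX ℚ (X * u)) := by
      rw [hW, mul_pow, ← hcancel]; ring
    rw [e, PowerSeries.coeff_X_pow_mul', if_pos hk', star hu (m - k)]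
    by_cases h : k = m
    · rw [if_pos (by omega), if_pos h]
    · rw [if_neg (by omega), if_neg h]
  rw [Finset.sum_congr rfl (fun k hk => by rw [step3 k hk, mul_ite, mul_one, mul_zero]),
    Finset.sum_ite_eq' (range (m + 1)) m (fun k => coeff k P),
    if_pos (mem_range.mpr (Nat.lt_succ_self m))]


end Core

theorem zpow'_natCast (f : PowerSeries ℚ) (k : ℕ) : zpow' f (k : ℤ) = f ^ k := by
  unfold zpow'
  rw [Int.toNat_natCast, Int.toNat_of_nonpos (by omega), pow_zero, mul_one]

theorem zpow'_neg_natCast (f : PowerSeries ℚ) (k : ℕ) : zpow' f (-(k : ℤ)) = f⁻¹ ^ k := by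
  unfold zpow'
  rw [Int.toNat_of_nonpos (by omega), neg_neg, Int.toNat_natCast, pow_zero, one_mul]

section Zpow
variable {f : PowerSeries ℚ} (hf : constantCoeff f ≠ 0)
include hf

theorem pow_mul_inv_pow (p q : ℕ) : f ^ p * f⁻¹ ^ q = zpow' f ((p : ℤ) - q) := by
  rcases le_total q p with h | h
  · have : f ^ p = f ^ (p - q) * f ^ q := by rw [← pow_add]; congr 1; omega
    rw [this, mul_assoc, ← mul_pow, PowerSeries.mul_inv_cancel f hf, one_pow, mul_one,
      show (p : ℤ) - q = ((p - q : ℕ) : ℤ) by omega, zpow'_natCast]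
  · have : f⁻¹ ^ q = f⁻¹ ^ (q - p) * f⁻¹ ^ p := by rw [← pow_add]; congr 1; omega
    rw [this, ← mul_assoc, mul_comm (f ^ p), mul_assoc, ← mul_pow,
      PowerSeries.mul_inv_cancel f hf, one_pow, mul_one,
      show (p : ℤ) - q = -((q - p : ℕ) : ℤ) by omega, zpow'_neg_natCast]

theorem zpow'_add (a b : ℤ) : zpow' f (a + b) = zpow' f a * zpow' f b := by
  have h1 : zpow' f a * zpow' f b
      = f ^ (a.toNat + b.toNat) * f⁻¹ ^ ((-a).toNat + (-b).toNat) := by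
    unfold zpow'; rw [pow_add, pow_add]; ring
  rw [h1, pow_mul_inv_pow hf,
    show ((a.toNat + b.toNat : ℕ) : ℤ) - (((-a).toNat + (-b).toNat : ℕ) : ℤ) = a + b by omega]


end Zpow

section MoreEv
variable {y : PowerSeries ℚ} (hy : constantCoeff y = 0)
include hy

theorem ev_sub (P Q : PowerSeries ℚ) : ev y (P - Q) = ev y P - ev y Q := by
  ext m
  rw [map_sub, coeff_ev hy, coeff_ev hy, coeff_ev hy, ← Finset.sum_sub_distrib]
  exact Finset.sum_congr rfl fun i _ => by rw [map_sub, sub_mul]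

theorem ev_two : ev y (2 : PowerSeries ℚ) = 2 := by
  rw [← map_ofNat (C (R := ℚ)) 2, ev_C hy, map_ofNat]

theorem ev_zpow' {f : PowerSeries ℚ} (hf : constantCoeff f ≠ 0) (e : ℤ) :
    ev y (zpow' f e) = zpow' (ev y f) e := by
  unfold zpow'
  rw [ev_mul hy, ev_pow hy, ev_pow hy, ev_inv hy hf]

end MoreEv

theorem cc_X_sub_two : constantCoeff (X - 2 : PowerSeries ℚ) = -2 := by
  rw [map_sub, constantCoeff_X, map_ofNat]; norm_num

theorem cc_one_add_X : constantCoeff (1 + X : PowerSeries ℚ) = 1 := by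
  rw [map_add, constantCoeff_X, map_one, add_zero]

theorem cc_one_sub_X : constantCoeff (1 - X : PowerSeries ℚ) = 1 := by
  rw [map_sub, constantCoeff_X, map_one, sub_zero]

theorem vw_eq (g n : ℕ) : vwIntegrand g n
    = (zpow' (X - 2) (1 - 2 * (g : ℤ)) * (zpow' (1 + X) (-(g : ℤ)) *
        (zpow' (1 - X) (-(g : ℤ)) * (1 - 2 * X) ^ g)))
      * ((X - 2) * ((1 + X) * (1 - X)⁻¹)) ^ n := by
  have hA : constantCoeff (X - 2 : PowerSeries ℚ) ≠ 0 := by rw [cc_X_sub_two]; norm_num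
  have hB : constantCoeff (1 + X : PowerSeries ℚ) ≠ 0 := by rw [cc_one_add_X]; norm_num
  have hW : constantCoeff (1 - X : PowerSeries ℚ) ≠ 0 := by rw [cc_one_sub_X]; norm_num
  unfold vwIntegrand
  rw [show (n : ℤ) + 1 - 2 * (g : ℤ) = (1 - 2 * (g : ℤ)) + (n : ℤ) by ring, zpow'_add hA,
    zpow'_natCast,
    show (n : ℤ) - (g : ℤ) = (-(g : ℤ)) + (n : ℤ) by ring, zpow'_add hB, zpow'_natCast,
    show -((n : ℤ) + (g : ℤ)) = (-(g : ℤ)) + (-(n : ℤ)) by ring, zpow'_add hW,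
    zpow'_neg_natCast]
  rw [mul_pow, mul_pow]
  simp only [zpow'_neg_natCast]
  ring

end DiagRes

open DiagRes in
/-- **The diagonal of the double generating series is a residue.**
Let `a_{in} = ∫_{C^[i]}(ω-2)^{n+1-2g}(1+ω)^{n-g}(1-ω)^{-(n+g)}(1-2ω)^g` and let `s` be the
square root (with constant term `1`) of `1 + 8q/(1+q) = (1+9q)/(1+q)`, so that
`x₀ = ½(1 - s)` and `x₁ = ½(1 + s)` are the roots of `(1+q)x² - (1+q)x - 2q`, with
`x₀ → 0` as `q → 0`.  The claim: the diagonal `∑_n a_{nn} q^n` equals the residue at the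
simple pole `x = x₀` of
`(1-2x)^g/((x-2)^{2g-1}(1-x²)^g) · (-(1-x))/((1+q)x² - (1+q)x - 2q)`,
namely the value at `x = x₀` of the numerator divided by `(1+q)(x₀ - x₁)`. -/
theorem diagonal_is_residue
    (g : ℕ) (s : PowerSeries ℚ)
    (hs0 : PowerSeries.constantCoeff s = 1)
    (hs2 : s ^ 2 * (1 + PowerSeries.X) = 1 + 9 * PowerSeries.X) :
    PowerSeries.mk (fun n => aCoef g n n)
      = (-(1 - PowerSeries.C (1/2 : ℚ) * (1 - s)))
          * (1 - 2 * (PowerSeries.C (1/2 : ℚ) * (1 - s))) ^ g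
          * zpow' (PowerSeries.C (1/2 : ℚ) * (1 - s) - 2) (-(2 * (g : ℤ) - 1))
          * zpow' (1 - (PowerSeries.C (1/2 : ℚ) * (1 - s)) ^ 2) (-(g : ℤ))
          * ((1 + PowerSeries.X)
              * (PowerSeries.C (1/2 : ℚ) * (1 - s) - PowerSeries.C (1/2 : ℚ) * (1 + s)))⁻¹ := by
  have h2 : (C (1/2 : ℚ)) * 2 = 1 := by
    rw [← map_ofNat (C (R := ℚ)) 2, ← map_mul]
    norm_num
  set x₀ : PowerSeries ℚ := C (1/2 : ℚ) * (1 - s) with hx₀def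
  have hx0 : constantCoeff x₀ = 0 := by
    rw [hx₀def, map_mul, map_sub, map_one, hs0, constantCoeff_C, sub_self, mul_zero]
  -- constant coefficients of basic units
  have hcA : constantCoeff (x₀ - 2) ≠ 0 := by
    rw [map_sub, hx0, map_ofNat]; norm_num
  have hcB : constantCoeff (1 + x₀) ≠ 0 := by
    rw [map_add, hx0, map_one, add_zero]; norm_num
  have hcW : constantCoeff (1 - x₀) ≠ 0 := by
    rw [map_sub, hx0, map_one, sub_zero]; norm_num
  have hcS : constantCoeff ((1 + X) * s) ≠ 0 := by
    rw [map_mul, cc_one_add_X, hs0]; norm_num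
  set u : PowerSeries ℚ := (x₀ - 2) * ((1 + x₀) * (1 - x₀)⁻¹) with hudef
  have hcu : constantCoeff u ≠ 0 := by
    rw [hudef, map_mul, map_mul, PowerSeries.constantCoeff_inv]
    intro h
    rcases mul_eq_zero.mp h with h' | h'
    · exact hcA h'
    rcases mul_eq_zero.mp h' with h'' | h''
    · exact hcB h''
    · exact hcW (inv_eq_zero.mp h'')
  -- unit relations
  have r1 : (x₀ - 2) * (x₀ - 2)⁻¹ = 1 := PowerSeries.mul_inv_cancel _ hcA
  have r2 : (1 + x₀) * (1 + x₀)⁻¹ = 1 := PowerSeries.mul_inv_cancel _ hcB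
  have rw' : (1 - x₀) * (1 - x₀)⁻¹ = 1 := PowerSeries.mul_inv_cancel _ hcW
  have r3 : ((1 + X) * s) * ((1 + X) * s)⁻¹ = 1 := PowerSeries.mul_inv_cancel _ hcS
  -- the algebraic functional equation
  have hI1 : x₀ * (1 - x₀) = X * ((x₀ - 2) * (1 + x₀)) := by
    rw [hx₀def]
    linear_combination (-(C (1/2 : ℚ))^2) * hs2
      + ((s * (1 + X) - 1 - 5 * X) * (C (1/2 : ℚ)) - 2 * X) * h2
  have hXu : X * u = x₀ := by
    calc X * u = (X * ((x₀ - 2) * (1 + x₀))) * (1 - x₀)⁻¹ := by rw [hudef]; ring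
      _ = (x₀ * (1 - x₀)) * (1 - x₀)⁻¹ := by rw [hI1]
      _ = x₀ * ((1 - x₀) * (1 - x₀)⁻¹) := by ring
      _ = x₀ := by rw [rw', mul_one]
  -- derivative facts
  have hdx : d⁄dX ℚ x₀ = -(C (1/2 : ℚ) * d⁄dX ℚ s) := by
    rw [hx₀def, Derivation.leibniz, smul_eq_mul, smul_eq_mul, derivative_C, mul_zero, add_zero,
      map_sub, Derivation.map_one_eq_zero, zero_sub, mul_neg]
  have hds : s ^ 2 + (1 + X) * (2 * s * d⁄dX ℚ s) = 9 := by
    have h9 : (C (R := ℚ)) (9 : ℚ) = (9 : PowerSeries ℚ) := map_ofNat _ 9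
    have hs2' : s ^ 2 * (1 + X) = 1 + C 9 * X := by rw [h9]; exact hs2
    have h := congrArg (⇑(d⁄dX ℚ)) hs2'
    simp only [Derivation.leibniz, Derivation.leibniz_pow, smul_eq_mul, nsmul_eq_mul,
      pow_one, derivative_X, derivative_C, map_add, Derivation.map_one_eq_zero, mul_one,
      mul_zero, add_zero, zero_add, Nat.cast_ofNat] at h
    rw [← h9]
    linear_combination h
  have hI2 : (d⁄dX ℚ x₀) * ((1 + X) * s) = (x₀ - 2) * (1 + x₀) := by
    rw [hdx, hx₀def]
    linear_combination (-(C (1/2 : ℚ))^2) * hds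
      + ((d⁄dX ℚ s) * s * (1 + X) * (C (1/2 : ℚ)) + (s - 5) * (C (1/2 : ℚ)) - 2) * h2
  -- inverse of u
  have hu_inv : u⁻¹ = (x₀ - 2)⁻¹ * ((1 + x₀)⁻¹ * (1 - x₀)) := by
    rw [eq_comm, PowerSeries.eq_inv_iff_mul_eq_one hcu, hudef]
    linear_combination ((x₀ - 2) * (x₀ - 2)⁻¹ * (1 + x₀) * (1 + x₀)⁻¹) * rw'
      + ((x₀ - 2) * (x₀ - 2)⁻¹) * r2 + r1
  -- the residue identity
  have R2 : (d⁄dX ℚ x₀) * u⁻¹ = (1 - x₀) * ((1 + X) * s)⁻¹ := by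
    rw [hu_inv]
    linear_combination ((x₀ - 2)⁻¹ * (1 + x₀)⁻¹ * (1 - x₀) * ((1 + X) * s)⁻¹) * hI2
      - ((d⁄dX ℚ x₀) * (x₀ - 2)⁻¹ * (1 + x₀)⁻¹ * (1 - x₀)) * r3
      + ((1 - x₀) * ((1 + X) * s)⁻¹ * (x₀ - 2) * (x₀ - 2)⁻¹) * r2
      + ((1 - x₀) * ((1 + X) * s)⁻¹) * r1
  have hdiffneg : x₀ - C (1/2 : ℚ) * (1 + s) = -s := by
    rw [hx₀def]; linear_combination (-s) * h2
  have hneginv : ((1 + X) * -s)⁻¹ = -(((1 + X) * s)⁻¹) := by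
    rw [eq_comm, PowerSeries.eq_inv_iff_mul_eq_one (show constantCoeff ((1 + X) * -s) ≠ 0 by rw [map_mul, cc_one_add_X, map_neg, hs0]; norm_num)]
    linear_combination r3
  -- evaluation of the components
  have hevH : ev x₀ ((X - 2) * ((1 + X) * (1 - X)⁻¹)) = u := by
    rw [ev_mul hx0, ev_mul hx0, ev_inv hx0 (by rw [cc_one_sub_X]; norm_num),
      ev_sub hx0, ev_add hx0, ev_X hx0, ev_two hx0, ev_one hx0, ev_sub hx0, ev_one hx0,
      ev_X hx0, hudef]
  have hevG : ev x₀ (zpow' (X - 2) (1 - 2 * (g : ℤ)) * (zpow' (1 + X) (-(g : ℤ)) *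
      (zpow' (1 - X) (-(g : ℤ)) * (1 - 2 * X) ^ g)))
      = zpow' (x₀ - 2) (1 - 2 * (g : ℤ)) * (zpow' (1 + x₀) (-(g : ℤ)) *
        (zpow' (1 - x₀) (-(g : ℤ)) * (1 - 2 * x₀) ^ g)) := by
    rw [ev_mul hx0, ev_mul hx0, ev_mul hx0, ev_pow hx0,
      ev_zpow' hx0 (by rw [cc_X_sub_two]; norm_num),
      ev_zpow' hx0 (by rw [cc_one_add_X]; norm_num),
      ev_zpow' hx0 (by rw [cc_one_sub_X]; norm_num),
      ev_sub hx0, ev_add hx0, ev_X hx0, ev_two hx0, ev_one hx0,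
      ev_sub hx0, ev_one hx0, ev_X hx0,
      ev_sub hx0, ev_one hx0, ev_mul hx0, ev_two hx0, ev_X hx0]
  -- splitting `zpow' (1 - x₀^2)`
  have hsplit : zpow' (1 - x₀ ^ 2) (-(g : ℤ))
      = zpow' (1 - x₀) (-(g : ℤ)) * zpow' (1 + x₀) (-(g : ℤ)) := by
    rw [zpow'_neg_natCast, zpow'_neg_natCast, zpow'_neg_natCast,
      show (1 - x₀ ^ 2 : PowerSeries ℚ) = (1 - x₀) * (1 + x₀) by ring,
      PowerSeries.mul_inv_rev, mul_pow]
    ring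
  have hexp : zpow' (x₀ - 2) (-(2 * (g : ℤ) - 1)) = zpow' (x₀ - 2) (1 - 2 * (g : ℤ)) := by
    rw [show -(2 * (g : ℤ) - 1) = 1 - 2 * (g : ℤ) by ring]
  -- now compare coefficients
  ext n
  rw [PowerSeries.coeff_mk]
  have hT := T0 hcu (vwIntegrand g n) n
  rw [hXu] at hT
  rw [aCoef, ← hT]
  congr 1
  rw [vw_eq, ev_mul hx0, ev_pow hx0, hevH, hevG, mul_assoc]
  have hun : u ^ n * (d⁄dX ℚ x₀ * u⁻¹ ^ (n + 1)) = d⁄dX ℚ x₀ * u⁻¹ := by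
    have huu : u ^ n * u⁻¹ ^ n = 1 := by
      rw [← mul_pow, PowerSeries.mul_inv_cancel u hcu, one_pow]
    calc u ^ n * (d⁄dX ℚ x₀ * u⁻¹ ^ (n + 1))
        = (u ^ n * u⁻¹ ^ n) * (d⁄dX ℚ x₀ * u⁻¹) := by rw [pow_succ]; ring
      _ = d⁄dX ℚ x₀ * u⁻¹ := by rw [huu, one_mul]
  rw [hun, hdiffneg, hneginv, hexp, hsplit, R2]
  ring
end

section
/- The generating function for pairs of nested partitions satisfies $\sum_{\mu \le \lambda} q^{|\mu|+|\lambda|} = (1-q)\prod_{n=1}^{\infty}\frac{1}{(1-q^n)^2}$, where the sum is over pairs of partitions $\mu, \lambda$ with $\mu_i \le \lambda_i$ for all $i$. -/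
namespace NestedGF

open Finset

/-- weight of a finsupp -/
def wt (f : ℕ →₀ ℕ) : ℕ := f.sum fun _ v => v

lemma wt_eq_sum_range {f : ℕ →₀ ℕ} {N : ℕ} (h : ∀ x, N ≤ x → f x = 0) :
    wt f = ∑ x ∈ range N, f x := by
  refine Finsupp.sum_of_support_subset f ?_ _ (by simp)
  intro x hx
  simp only [Finsupp.mem_support_iff] at hx
  simp only [mem_range]
  by_contra hc
  exact hx (h x (le_of_not_gt hc))

def bnd (f : ℕ →₀ ℕ) : ℕ := (f.support.sup id) + 1

lemma apply_eq_zero_of_bnd_le (f : ℕ →₀ ℕ) {x : ℕ} (h : bnd f ≤ x) : f x = 0 := by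
  by_contra hc
  have hx : x ∈ f.support := Finsupp.mem_support_iff.mpr hc
  have h2 : x ≤ f.support.sup id := Finset.le_sup (f := id) hx
  unfold bnd at h
  omega

/-- build a finsupp from a function vanishing from `N` on -/
def ofFun (g : ℕ → ℕ) (N : ℕ) (h : ∀ x, N ≤ x → g x = 0) : ℕ →₀ ℕ :=
  ⟨(range N).filter (fun x => g x ≠ 0), g, by
    intro a
    simp only [mem_filter, mem_range]
    constructor
    · rintro ⟨_, h2⟩; exact h2
    · intro ha
      refine ⟨?_, ha⟩
      by_contra hc
      exact ha (h a (le_of_not_gt hc))⟩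

@[simp] lemma ofFun_apply (g : ℕ → ℕ) (N : ℕ) (h) (x : ℕ) : ofFun g N h x = g x := rfl

lemma apply_le_wt (f : ℕ →₀ ℕ) (x : ℕ) : f x ≤ wt f := by
  rcases Nat.eq_zero_or_pos (f x) with h | h
  · simp [h]
  · have hx : x ∈ f.support := Finsupp.mem_support_iff.mpr (by omega)
    exact Finset.single_le_sum (f := fun i => f i) (fun i _ => Nat.zero_le _) hx

lemma wt_le_apply_zero {f : ℕ →₀ ℕ} (hf : Antitone ⇑f) {m x : ℕ} (hw : wt f ≤ m)
    (hx : m ≤ x) : f x = 0 := by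
  by_contra hc
  have h1 : ∀ y ∈ range (x+1), 1 ≤ f y := by
    intro y hy
    simp only [mem_range] at hy
    have := hf (show y ≤ x by omega)
    omega
  have h2 : (range (x+1)).card • 1 ≤ ∑ y ∈ range (x+1), f y :=
    Finset.card_nsmul_le_sum _ _ _ h1
  simp only [card_range, smul_eq_mul, mul_one] at h2
  have h3 : ∑ y ∈ range (x+1), f y ≤ wt f := by
    rw [wt_eq_sum_range (f := f) (N := max (x+1) (bnd f))
      (fun z hz => apply_eq_zero_of_bnd_le f (by omega))]
    exact Finset.sum_le_sum_of_subset (by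
      intro z hz; simp only [mem_range] at *; omega)
  omega

/-- partitions-with-conditions subtypes are finite -/
lemma finite_aux (m : ℕ) : Finite {f : ℕ →₀ ℕ // Antitone ⇑f ∧ wt f ≤ m} := by
  refine Finite.of_injective
    (fun f => (fun x : Fin m => (⟨f.1 x.1, by
      have h1 := apply_le_wt f.1 x.1
      have h2 := f.2.2
      omega⟩ : Fin (m+1)))) ?_
  rintro ⟨f, hf, hwf⟩ ⟨g, hg, hwg⟩ h
  simp only [Subtype.mk.injEq]
  ext x
  rcases lt_or_ge x m with hx | hx
  · exact congrArg Fin.val (congrFun h ⟨x, hx⟩)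
  · rw [wt_le_apply_zero hf hwf hx, wt_le_apply_zero hg hwg hx]

lemma finite_ptn (P : (ℕ →₀ ℕ) → Prop) {m : ℕ}
    (h : ∀ f, P f → Antitone ⇑f ∧ wt f ≤ m) : Finite {f : ℕ →₀ ℕ // P f} := by
  have := finite_aux m
  exact Finite.of_injective
    (fun f => (⟨f.1, h f.1 f.2⟩ : {f : ℕ →₀ ℕ // Antitone ⇑f ∧ wt f ≤ m}))
    (by
      rintro ⟨a, ha⟩ ⟨b, hb⟩ hab
      simp only [Subtype.mk.injEq] at hab
      exact Subtype.ext hab)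

lemma finite_pair (P : (ℕ →₀ ℕ) × (ℕ →₀ ℕ) → Prop) {m : ℕ}
    (h : ∀ p, P p → (Antitone ⇑p.1 ∧ wt p.1 ≤ m) ∧ (Antitone ⇑p.2 ∧ wt p.2 ≤ m)) :
    Finite {p : (ℕ →₀ ℕ) × (ℕ →₀ ℕ) // P p} := by
  have := finite_aux m
  exact Finite.of_injective
    (fun p => ((⟨p.1.1, (h p.1 p.2).1⟩ : {f : ℕ →₀ ℕ // Antitone ⇑f ∧ wt f ≤ m}),
               (⟨p.1.2, (h p.1 p.2).2⟩ : {f : ℕ →₀ ℕ // Antitone ⇑f ∧ wt f ≤ m})))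
    (by
      rintro ⟨⟨a1, a2⟩, ha⟩ ⟨⟨b1, b2⟩, hb⟩ hab
      simp only [Prod.mk.injEq, Subtype.mk.injEq] at hab
      simp [Prod.ext_iff, hab.1, hab.2])


/-! ### tail and cons -/

def tailF (f : ℕ →₀ ℕ) : ℕ →₀ ℕ :=
  ofFun (fun x => f (x+1)) (bnd f)
    (fun x hx => apply_eq_zero_of_bnd_le f (by omega))

@[simp] lemma tailF_apply (f : ℕ →₀ ℕ) (x : ℕ) : tailF f x = f (x+1) := rfl

def consF (a : ℕ) (f : ℕ →₀ ℕ) : ℕ →₀ ℕ :=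
  ofFun (fun x => if x = 0 then a else f (x-1)) (bnd f + max a 1)
    (fun x hx => by
      have h0 : x ≠ 0 := by have := Nat.le_max_right a 1; omega
      simp only [h0, if_false]
      exact apply_eq_zero_of_bnd_le f (by omega))

@[simp] lemma consF_apply_zero (a : ℕ) (f : ℕ →₀ ℕ) : consF a f 0 = a := rfl

@[simp] lemma consF_apply_succ (a : ℕ) (f : ℕ →₀ ℕ) (x : ℕ) : consF a f (x+1) = f x := by
  show (if x+1 = 0 then a else f (x+1-1)) = f x
  simp

lemma wt_tailF (f : ℕ →₀ ℕ) : wt f = f 0 + wt (tailF f) := by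
  rw [wt_eq_sum_range (f := f) (N := bnd f + 1) (fun x hx => apply_eq_zero_of_bnd_le f (by omega)),
      wt_eq_sum_range (f := tailF f) (N := bnd f) (fun x hx => by
        simp only [tailF_apply]
        exact apply_eq_zero_of_bnd_le f (by omega)),
      Finset.sum_range_succ' (fun x => f x) (bnd f)]
  simp only [tailF_apply]
  omega

lemma wt_consF (a : ℕ) (f : ℕ →₀ ℕ) : wt (consF a f) = a + wt f := by
  have h := wt_tailF (consF a f)
  have h2 : tailF (consF a f) = f := by
    ext x; simp
  rw [h2] at h
  simpa using h

lemma antitone_tailF {f : ℕ →₀ ℕ} (hf : Antitone ⇑f) : Antitone ⇑(tailF f) :=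
  antitone_nat_of_succ_le (fun n => by
    simp only [tailF_apply]; exact hf (by omega))

lemma antitone_consF {a : ℕ} {f : ℕ →₀ ℕ} (hf : Antitone ⇑f) (ha : f 0 ≤ a) :
    Antitone ⇑(consF a f) :=
  antitone_nat_of_succ_le (fun n => by
    cases n with
    | zero => simpa using ha
    | succ k =>
      simp only [consF_apply_succ]
      exact hf (by omega))

lemma consF_tailF {f : ℕ →₀ ℕ} {a : ℕ} (h : f 0 = a) : consF a (tailF f) = f := by
  ext x
  cases x with
  | zero => simp [h]
  | succ k => simp

/-! ### split lemma for Nat.card -/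

open Classical in
lemma card_split {α : Type*} (P Q : α → Prop) [Finite {x : α // P x}] :
    Nat.card {x : α // P x} =
      Nat.card {x : α // P x ∧ Q x} + Nat.card {x : α // P x ∧ ¬ Q x} := by
  classical
  have e : {x : α // P x} ≃ {x : α // P x ∧ Q x} ⊕ {x : α // P x ∧ ¬ Q x} :=
    { toFun := fun x => if h : Q x.1 then Sum.inl ⟨x.1, x.2, h⟩ else Sum.inr ⟨x.1, x.2, h⟩
      invFun := fun s => Sum.elim (fun y => ⟨y.1, y.2.1⟩) (fun y => ⟨y.1, y.2.1⟩) s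
      left_inv := fun x => by by_cases h : Q x.1 <;> simp [h]
      right_inv := fun s => by
        rcases s with y | y
        · simp [y.2.2]
        · simp [y.2.2] }
  have f1 : Finite {x : α // P x ∧ Q x} :=
    Finite.of_injective (fun y => (⟨y.1, y.2.1⟩ : {x : α // P x}))
      (by rintro ⟨a, _⟩ ⟨b, _⟩ hab; simp only [Subtype.mk.injEq] at hab; exact Subtype.ext hab)
  have f2 : Finite {x : α // P x ∧ ¬ Q x} :=
    Finite.of_injective (fun y => (⟨y.1, y.2.1⟩ : {x : α // P x}))
      (by rintro ⟨a, _⟩ ⟨b, _⟩ hab; simp only [Subtype.mk.injEq] at hab; exact Subtype.ext hab)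
  rw [Nat.card_congr e, Nat.card_sum]

/-! ### counts -/

noncomputable def pcnt (m : ℕ) : ℕ := Nat.card {f : ℕ →₀ ℕ // Antitone ⇑f ∧ wt f = m}

noncomputable def pb (N m : ℕ) : ℕ := Nat.card {f : ℕ →₀ ℕ // Antitone ⇑f ∧ wt f = m ∧ f 0 ≤ N}

instance (m : ℕ) : Finite {f : ℕ →₀ ℕ // Antitone ⇑f ∧ wt f = m} :=
  finite_ptn _ (fun f hf => ⟨hf.1, le_of_eq hf.2⟩)

instance (N m : ℕ) : Finite {f : ℕ →₀ ℕ // Antitone ⇑f ∧ wt f = m ∧ f 0 ≤ N} :=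
  finite_ptn _ (fun f hf => ⟨hf.1, le_of_eq hf.2.1⟩)

lemma pcnt_eq_pb {N m : ℕ} (h : m ≤ N) : pcnt m = pb N m := by
  refine Nat.card_congr (Equiv.subtypeEquivRight (fun f => ?_))
  constructor
  · rintro ⟨h1, h2⟩
    exact ⟨h1, h2, le_trans (apply_le_wt f 0) (by omega)⟩
  · rintro ⟨h1, h2, _⟩; exact ⟨h1, h2⟩

lemma eq_zero_of_apply_zero {f : ℕ →₀ ℕ} (hf : Antitone ⇑f) (h : f 0 = 0) : f = 0 := by
  ext x
  have := hf (Nat.zero_le x)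
  simp only [Finsupp.coe_zero, Pi.zero_apply]
  omega

lemma pb_zero (m : ℕ) : pb 0 m = if m = 0 then 1 else 0 := by
  rcases Nat.eq_zero_or_pos m with rfl | hm
  · rw [if_pos rfl, pb, Nat.card_eq_one_iff_unique]
    constructor
    · constructor
      rintro ⟨f, hf, hwf, hf0⟩ ⟨g, hg, hwg, hg0⟩
      have h1 : f = 0 := eq_zero_of_apply_zero hf (by omega)
      have h2 : g = 0 := eq_zero_of_apply_zero hg (by omega)
      simp [Subtype.ext_iff, h1, h2]
    · exact ⟨⟨0, by simp [Antitone, wt]⟩⟩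
  · rw [if_neg (by omega), pb, Nat.card_eq_zero]
    left
    constructor
    rintro ⟨f, hf, hwf, hf0⟩
    have h1 : f = 0 := eq_zero_of_apply_zero hf (by omega)
    rw [h1] at hwf
    simp [wt] at hwf
    omega

/-- the key recursion for bounded partitions -/
lemma pb_succ (N m : ℕ) :
    pb (N+1) m = pb N m +
      Nat.card {g : ℕ →₀ ℕ // Antitone ⇑g ∧ wt g + (N+1) = m ∧ g 0 ≤ N+1} := by
  rw [pb, card_split (fun f : ℕ →₀ ℕ => Antitone ⇑f ∧ wt f = m ∧ f 0 ≤ N+1) (fun f => f 0 ≤ N)]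
  congr 1
  · refine Nat.card_congr (Equiv.subtypeEquivRight (fun f => ?_))
    constructor
    · rintro ⟨⟨h1, h2, _⟩, h4⟩; exact ⟨h1, h2, h4⟩
    · rintro ⟨h1, h2, h3⟩; exact ⟨⟨h1, h2, by omega⟩, h3⟩
  · refine Nat.card_congr ?_
    refine
      { toFun := fun f => ⟨tailF f.1, antitone_tailF f.2.1.1, by
          obtain ⟨⟨h1, h2, h3⟩, h4⟩ := f.2
          have h5 := wt_tailF f.1
          omega, by
          obtain ⟨⟨h1, h2, h3⟩, h4⟩ := f.2
          have h7 : tailF f.1 0 = f.1 1 := by simp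
          have h6 : f.1 1 ≤ f.1 0 := h1 (show (0:ℕ) ≤ 1 by omega)
          omega⟩
        invFun := fun g => ⟨consF (N+1) g.1, ⟨antitone_consF g.2.1 g.2.2.2, by
          have h1 := g.2.2.1
          rw [wt_consF]; omega, by simp⟩, by simp⟩
        left_inv := ?_
        right_inv := ?_ }
    · rintro ⟨f, ⟨h1, h2, h3⟩, h4⟩
      have h4' : ¬ f 0 ≤ N := h4
      apply Subtype.ext
      show consF (N+1) (tailF f) = f
      exact consF_tailF (by omega)
    · rintro ⟨g, h1, h2, h3⟩
      refine Subtype.ext ?_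
      show tailF (consF (N+1) g) = g
      ext x; simp

/-! ### power series -/

open PowerSeries

noncomputable def Pb (N : ℕ) : PowerSeries ℚ := PowerSeries.mk fun m => (pb N m : ℚ)

noncomputable def FN (N : ℕ) : PowerSeries ℚ :=
  ∏ n ∈ range N, (1 - (PowerSeries.X : PowerSeries ℚ) ^ (n + 1))

lemma Pb_zero : Pb 0 = 1 := by
  ext m
  simp only [Pb, PowerSeries.coeff_mk, PowerSeries.coeff_one, pb_zero]
  split <;> simp

lemma card_shift (N m : ℕ) :
    (Nat.card {g : ℕ →₀ ℕ // Antitone ⇑g ∧ wt g + (N+1) = m ∧ g 0 ≤ N+1} : ℚ) =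
      if N + 1 ≤ m then (pb (N+1) (m - (N+1)) : ℚ) else 0 := by
  split
  · next h =>
    rw [pb]
    congr 1
    refine Nat.card_congr (Equiv.subtypeEquivRight (fun f => ?_))
    constructor
    · rintro ⟨h1, h2, h3⟩; exact ⟨h1, by omega, h3⟩
    · rintro ⟨h1, h2, h3⟩; exact ⟨h1, by omega, h3⟩
  · next h =>
    norm_cast
    rw [Nat.card_eq_zero]
    left
    constructor
    rintro ⟨g, h1, h2, h3⟩
    omega

lemma Pb_rec (N : ℕ) : Pb N = (1 - X ^ (N+1)) * Pb (N+1) := by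
  ext m
  rw [sub_mul, one_mul, map_sub,
    show (X:PowerSeries ℚ)^(N+1) * Pb (N+1) = Pb (N+1) * X^(N+1) from mul_comm _ _,
    PowerSeries.coeff_mul_X_pow']
  simp only [Pb, PowerSeries.coeff_mk]
  have h := pb_succ N m
  have h2 := card_shift N m
  set K := Nat.card {g : ℕ →₀ ℕ // Antitone ⇑g ∧ wt g + (N+1) = m ∧ g 0 ≤ N+1} with hK
  rcases le_or_gt (N+1) m with hc | hc
  · rw [if_pos hc] at h2 ⊢
    have h3 : (pb (N+1) m : ℚ) = (pb N m : ℚ) + (K : ℚ) := by exact_mod_cast h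
    rw [h2] at h3
    linarith
  · rw [if_neg (by omega)] at h2 ⊢
    have h3 : (pb (N+1) m : ℚ) = (pb N m : ℚ) + (K : ℚ) := by exact_mod_cast h
    rw [h2] at h3
    linarith

lemma FN_mul_Pb (N : ℕ) : FN N * Pb N = 1 := by
  induction N with
  | zero => simp [FN, Pb_zero]
  | succ k ih =>
    have : FN (k+1) = FN k * (1 - X ^ (k+1)) := Finset.prod_range_succ _ k
    rw [this, mul_assoc, ← Pb_rec k, ih]

lemma coeff_FN_stable {m N : ℕ} (h : m ≤ N) :
    PowerSeries.coeff (R := ℚ) m (FN N) = PowerSeries.coeff (R := ℚ) m (FN m) := by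
  induction N with
  | zero => have : m = 0 := by omega
            subst this; rfl
  | succ k ih =>
    rcases Nat.lt_or_ge m (k+1) with h1 | h2
    · have hm : m ≤ k := by omega
      have e : FN (k+1) = FN k * (1 - X ^ (k+1)) := Finset.prod_range_succ _ k
      rw [e, mul_sub, mul_one, map_sub,
        PowerSeries.coeff_mul_X_pow', if_neg (by omega), sub_zero, ih hm]
    · have : m = k + 1 := by omega
      subst this; rfl


noncomputable def Pser : PowerSeries ℚ := PowerSeries.mk fun m => (pcnt m : ℚ)

lemma E_mul_Pser (E : PowerSeries ℚ)
    (hE : ∀ m, PowerSeries.coeff (R := ℚ) m E =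
      PowerSeries.coeff (R := ℚ) m
        (∏ n ∈ Finset.range (m + 1), (1 - (PowerSeries.X : PowerSeries ℚ) ^ (n + 1)))) :
    E * Pser = 1 := by
  have hE' : ∀ k m : ℕ, k ≤ m → PowerSeries.coeff (R := ℚ) k E = PowerSeries.coeff (R := ℚ) k (FN m) := by
    intro k m hkm
    rw [hE k, show (∏ n ∈ Finset.range (k + 1), (1 - (PowerSeries.X : PowerSeries ℚ) ^ (n + 1)))
        = FN (k+1) from rfl, coeff_FN_stable (by omega), coeff_FN_stable hkm]
  ext m
  rw [PowerSeries.coeff_mul]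
  have key : ∑ p ∈ Finset.HasAntidiagonal.antidiagonal m,
      (PowerSeries.coeff (R := ℚ) p.1) E * (PowerSeries.coeff (R := ℚ) p.2) Pser
      = ∑ p ∈ Finset.HasAntidiagonal.antidiagonal m,
      (PowerSeries.coeff (R := ℚ) p.1) (FN m) * (PowerSeries.coeff (R := ℚ) p.2) (Pb m) := by
    refine Finset.sum_congr rfl (fun p hp => ?_)
    rw [Finset.HasAntidiagonal.mem_antidiagonal] at hp
    rw [hE' p.1 m (by omega)]
    congr 1
    simp only [Pser, Pb, PowerSeries.coeff_mk]
    rw [pcnt_eq_pb (N := m) (by omega)]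
  rw [key, ← PowerSeries.coeff_mul, FN_mul_Pb]

/-! ### pair counts -/

noncomputable def DN (m : ℕ) : ℕ :=
  Nat.card {p : (ℕ →₀ ℕ) × (ℕ →₀ ℕ) //
    Antitone ⇑p.1 ∧ Antitone ⇑p.2 ∧ wt p.1 + wt p.2 = m}

noncomputable def cN (m : ℕ) : ℕ :=
  Nat.card {p : (ℕ →₀ ℕ) × (ℕ →₀ ℕ) //
    Antitone ⇑p.1 ∧ Antitone ⇑p.2 ∧ (∀ i, p.1 i ≤ p.2 i) ∧ wt p.1 + wt p.2 = m}

noncomputable def nn (m : ℕ) : ℕ :=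
  Nat.card {p : (ℕ →₀ ℕ) × (ℕ →₀ ℕ) //
    Antitone ⇑p.1 ∧ Antitone ⇑p.2 ∧ ¬ (∀ i, p.1 i ≤ p.2 i) ∧ wt p.1 + wt p.2 = m}

instance finDN (m : ℕ) : Finite {p : (ℕ →₀ ℕ) × (ℕ →₀ ℕ) //
    Antitone ⇑p.1 ∧ Antitone ⇑p.2 ∧ wt p.1 + wt p.2 = m} :=
  finite_pair (m := m) _ (fun p hp => ⟨⟨hp.1, by have := hp.2.2; omega⟩,
    ⟨hp.2.1, by have := hp.2.2; omega⟩⟩)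

lemma DN_split (m : ℕ) : DN m = cN m + nn m := by
  classical
  rw [DN, card_split _ (fun p : (ℕ →₀ ℕ) × (ℕ →₀ ℕ) => ∀ i, p.1 i ≤ p.2 i)]
  congr 1
  · exact Nat.card_congr (Equiv.subtypeEquivRight (fun p => by tauto))
  · exact Nat.card_congr (Equiv.subtypeEquivRight (fun p => by tauto))

lemma card_slice (m i : ℕ) (him : i ≤ m) :
    Nat.card {p : (ℕ →₀ ℕ) × (ℕ →₀ ℕ) //
      ((Antitone ⇑p.1 ∧ Antitone ⇑p.2 ∧ wt p.1 + wt p.2 = m) ∧ wt p.1 < i + 1) ∧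
        ¬ wt p.1 < i} = pcnt i * pcnt (m - i) := by
  have e : {p : (ℕ →₀ ℕ) × (ℕ →₀ ℕ) //
      ((Antitone ⇑p.1 ∧ Antitone ⇑p.2 ∧ wt p.1 + wt p.2 = m) ∧ wt p.1 < i + 1) ∧
        ¬ wt p.1 < i} ≃
      {f : ℕ →₀ ℕ // Antitone ⇑f ∧ wt f = i} ×
      {g : ℕ →₀ ℕ // Antitone ⇑g ∧ wt g = m - i} :=
    { toFun := fun p =>
        (⟨p.1.1, p.2.1.1.1, by
          have h3 : wt p.1.1 + wt p.1.2 = m := p.2.1.1.2.2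
          have h4 : wt p.1.1 < i + 1 := p.2.1.2
          have h5 : ¬ wt p.1.1 < i := p.2.2
          omega⟩,
         ⟨p.1.2, p.2.1.1.2.1, by
          have h3 : wt p.1.1 + wt p.1.2 = m := p.2.1.1.2.2
          have h4 : wt p.1.1 < i + 1 := p.2.1.2
          have h5 : ¬ wt p.1.1 < i := p.2.2
          omega⟩)
      invFun := fun q =>
        ⟨(q.1.1, q.2.1), ⟨⟨q.1.2.1, q.2.2.1, by
          have h1 : wt q.1.1 = i := q.1.2.2
          have h2 : wt q.2.1 = m - i := q.2.2.2
          show wt q.1.1 + wt q.2.1 = m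
          omega⟩, by
          have h1 : wt q.1.1 = i := q.1.2.2
          show wt q.1.1 < i + 1
          omega⟩, by
          have h1 : wt q.1.1 = i := q.1.2.2
          show ¬ wt q.1.1 < i
          omega⟩
      left_inv := fun p => rfl
      right_inv := fun q => rfl }
  rw [Nat.card_congr e, Nat.card_prod, pcnt, pcnt]

lemma DN_eq_sum (m : ℕ) : DN m = ∑ k ∈ range (m+1), pcnt k * pcnt (m - k) := by
  classical
  have key : ∀ j : ℕ, j ≤ m + 1 →
      Nat.card {p : (ℕ →₀ ℕ) × (ℕ →₀ ℕ) //
        (Antitone ⇑p.1 ∧ Antitone ⇑p.2 ∧ wt p.1 + wt p.2 = m) ∧ wt p.1 < j}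
      = ∑ k ∈ range j, pcnt k * pcnt (m - k) := by
    intro j
    induction j with
    | zero =>
      intro _
      rw [Finset.range_zero, Finset.sum_empty, Nat.card_eq_zero]
      left
      exact ⟨fun p => by have := p.2.2; omega⟩
    | succ i ih =>
      intro hj
      have fin1 : Finite {p : (ℕ →₀ ℕ) × (ℕ →₀ ℕ) //
          (Antitone ⇑p.1 ∧ Antitone ⇑p.2 ∧ wt p.1 + wt p.2 = m) ∧ wt p.1 < i + 1} :=
        finite_pair (m := m) _ (fun p hp => ⟨⟨hp.1.1, by have := hp.1.2.2; omega⟩,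
          ⟨hp.1.2.1, by have := hp.1.2.2; omega⟩⟩)
      rw [card_split _ (fun p : (ℕ →₀ ℕ) × (ℕ →₀ ℕ) => wt p.1 < i), Finset.sum_range_succ]
      congr 1
      · rw [← ih (by omega)]
        exact Nat.card_congr (Equiv.subtypeEquivRight (fun p => by
          constructor
          · rintro ⟨⟨h1, _⟩, h3⟩; exact ⟨h1, h3⟩
          · rintro ⟨h1, h3⟩; exact ⟨⟨h1, by omega⟩, h3⟩))
      · exact card_slice m i (by omega)
  rw [DN, ← key (m+1) (le_refl _)]
  exact Nat.card_congr (Equiv.subtypeEquivRight (fun p => by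
    constructor
    · rintro ⟨h1, h2, h3⟩
      refine ⟨⟨h1, h2, h3⟩, by omega⟩
    · rintro ⟨⟨h1, h2, h3⟩, _⟩
      exact ⟨h1, h2, h3⟩))

lemma coeff_Pser_sq (m : ℕ) :
    PowerSeries.coeff (R := ℚ) m (Pser ^ 2) = (DN m : ℚ) := by
  rw [sq, PowerSeries.coeff_mul, DN_eq_sum]
  rw [Finset.Nat.sum_antidiagonal_eq_sum_range_succ_mk]
  push_cast
  refine Finset.sum_congr rfl (fun k _ => ?_)
  simp [Pser]

/-! ### the reflection bijection -/

def alphaF (mu lam : ℕ →₀ ℕ) (i : ℕ) : ℕ →₀ ℕ :=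
  ofFun (fun x => if x < i then lam x + 1 else mu (x+1)) (bnd mu + bnd lam + i)
    (fun x hx => by
      rw [if_neg (by omega)]
      exact apply_eq_zero_of_bnd_le mu (by omega))

def betaF (mu lam : ℕ →₀ ℕ) (i : ℕ) : ℕ →₀ ℕ :=
  ofFun (fun x => if x ≤ i then mu x - 1 else lam (x-1)) (bnd mu + bnd lam + i + 1)
    (fun x hx => by
      rw [if_neg (by omega)]
      exact apply_eq_zero_of_bnd_le lam (by omega))

def muF (a b : ℕ →₀ ℕ) (j : ℕ) : ℕ →₀ ℕ :=
  ofFun (fun x => if x ≤ j then b x + 1 else a (x-1)) (bnd a + bnd b + j + 1)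
    (fun x hx => by
      rw [if_neg (by omega)]
      exact apply_eq_zero_of_bnd_le a (by omega))

def lamF (a b : ℕ →₀ ℕ) (j : ℕ) : ℕ →₀ ℕ :=
  ofFun (fun x => if x < j then a x - 1 else b (x+1)) (bnd a + bnd b + j)
    (fun x hx => by
      rw [if_neg (by omega)]
      exact apply_eq_zero_of_bnd_le b (by omega))

@[simp] lemma alphaF_apply (mu lam : ℕ →₀ ℕ) (i x : ℕ) :
    alphaF mu lam i x = if x < i then lam x + 1 else mu (x+1) := rfl
@[simp] lemma betaF_apply (mu lam : ℕ →₀ ℕ) (i x : ℕ) :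
    betaF mu lam i x = if x ≤ i then mu x - 1 else lam (x-1) := rfl
@[simp] lemma muF_apply (a b : ℕ →₀ ℕ) (j x : ℕ) :
    muF a b j x = if x ≤ j then b x + 1 else a (x-1) := rfl
@[simp] lemma lamF_apply (a b : ℕ →₀ ℕ) (j x : ℕ) :
    lamF a b j x = if x < j then a x - 1 else b (x+1) := rfl

section Phi

variable {mu lam : ℕ →₀ ℕ} {i : ℕ}
variable (hmu : Antitone ⇑mu) (hlam : Antitone ⇑lam)
variable (hv : lam i < mu i) (hmin : ∀ x, x < i → mu x ≤ lam x)

include hmu hv in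
lemma mu_pos_le {x : ℕ} (hx : x ≤ i) : 1 ≤ mu x := by
  have := hmu hx
  omega

include hmu hlam hv hmin in
lemma antitone_alphaF : Antitone ⇑(alphaF mu lam i) := by
  refine antitone_nat_of_succ_le (fun n => ?_)
  simp only [alphaF_apply]
  rcases lt_trichotomy (n+1) i with h1 | h1 | h1
  · rw [if_pos h1, if_pos (by omega)]
    have := hlam (show n ≤ n+1 by omega)
    omega
  · -- n+1 = i, n < i
    rw [if_neg (by omega), if_pos (by omega)]
    -- goal: mu (n+2) ≤ lam n + 1
    have h2 : mu (n+1+1) ≤ mu n := hmu (by omega)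
    have h3 : mu n ≤ lam n := hmin n (by omega)
    omega
  · rw [if_neg (by omega)]
    rcases lt_or_ge n i with h2 | h2
    · -- n < i < n+1 impossible unless i = n+... i ≤ n from h1 : i < n+1
      omega
    · rw [if_neg (by omega)]
      exact hmu (by omega)

include hmu hlam hv hmin in
lemma antitone_betaF : Antitone ⇑(betaF mu lam i) := by
  refine antitone_nat_of_succ_le (fun n => ?_)
  simp only [betaF_apply]
  rcases lt_trichotomy (n+1) (i+1) with h1 | h1 | h1
  · rw [if_pos (by omega), if_pos (by omega)]
    have := hmu (show n ≤ n+1 by omega)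
    omega
  · -- n = i
    rw [if_neg (by omega), if_pos (by omega)]
    have h2 : n = i := by omega
    subst h2
    simp only [Nat.add_sub_cancel]
    omega
  · rw [if_neg (by omega), if_neg (by omega)]
    have h2 : n - 1 ≤ n := by omega
    have h3 := hlam h2
    have h4 : (n+1) - 1 = n := by omega
    rw [h4]
    rcases Nat.eq_zero_or_pos n with rfl | hn
    · omega
    · have : lam n ≤ lam (n-1) := hlam (by omega)
      omega

include hmu hv in
lemma phi_index_spec : alphaF mu lam i i ≤ betaF mu lam i i + 1 := by
  simp only [alphaF_apply, betaF_apply, if_neg (lt_irrefl i), if_pos (le_refl i)]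
  have h1 : mu (i+1) ≤ mu i := hmu (by omega)
  omega

include hmu hv hmin in
lemma phi_index_min {x : ℕ} (hx : x < i) :
    ¬ (alphaF mu lam i x ≤ betaF mu lam i x + 1) := by
  simp only [alphaF_apply, betaF_apply, if_pos hx, if_pos (by omega : x ≤ i)]
  have h1 := hmin x hx
  have h2 : 1 ≤ mu x := mu_pos_le hmu hv (by omega)
  omega

include hmu hv in
lemma muF_alphaF_betaF : muF (alphaF mu lam i) (betaF mu lam i) i = mu := by
  ext x
  simp only [muF_apply, alphaF_apply, betaF_apply]
  rcases le_or_gt x i with h1 | h1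
  · rw [if_pos h1, if_pos h1]
    have h2 : 1 ≤ mu x := mu_pos_le hmu hv h1
    omega
  · rw [if_neg (by omega), if_neg (by omega)]
    have h2 : (x - 1) + 1 = x := by omega
    rw [h2]

lemma lamF_alphaF_betaF : lamF (alphaF mu lam i) (betaF mu lam i) i = lam := by
  ext x
  simp only [lamF_apply, alphaF_apply, betaF_apply]
  rcases lt_or_ge x i with h1 | h1
  · rw [if_pos h1, if_pos h1]
    omega
  · rw [if_neg (by omega), if_neg (by omega)]
    have h2 : (x + 1) - 1 = x := by omega
    rw [h2]

end Phi

section Psi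

variable {a b : ℕ →₀ ℕ} {j : ℕ}
variable (ha : Antitone ⇑a) (hb : Antitone ⇑b)
variable (hj : a j ≤ b j + 1) (hjmin : ∀ x, x < j → b x + 2 ≤ a x)

include ha hb hj in
lemma antitone_muF : Antitone ⇑(muF a b j) := by
  refine antitone_nat_of_succ_le (fun n => ?_)
  simp only [muF_apply]
  rcases lt_trichotomy (n+1) (j+1) with h1 | h1 | h1
  · rw [if_pos (by omega), if_pos (by omega)]
    have := hb (show n ≤ n+1 by omega)
    omega
  · have h2 : n = j := by omega
    subst h2
    rw [if_neg (by omega), if_pos (le_refl n)]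
    simpa using hj
  · rw [if_neg (by omega), if_neg (by omega)]
    have h4 : (n+1) - 1 = n := by omega
    rw [h4]
    exact ha (by omega)

include ha hb hjmin in
lemma antitone_lamF : Antitone ⇑(lamF a b j) := by
  refine antitone_nat_of_succ_le (fun n => ?_)
  simp only [lamF_apply]
  rcases lt_trichotomy (n+1) j with h1 | h1 | h1
  · rw [if_pos h1, if_pos (by omega)]
    have := ha (show n ≤ n+1 by omega)
    omega
  · -- n+1 = j
    rw [if_neg (by omega), if_pos (by omega)]
    have h2 := hjmin n (by omega)
    have h3 : b (n+1+1) ≤ b n := hb (by omega)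
    omega
  · rw [if_neg (by omega), if_neg (by omega)]
    exact hb (by omega)

include hb in
lemma psi_violation : lamF a b j j < muF a b j j := by
  simp only [lamF_apply, muF_apply, if_neg (lt_irrefl j), if_pos (le_refl j)]
  have := hb (show j ≤ j+1 by omega)
  omega

include hjmin in
lemma psi_nested_below {x : ℕ} (hx : x < j) : muF a b j x ≤ lamF a b j x := by
  simp only [lamF_apply, muF_apply, if_pos hx, if_pos (by omega : x ≤ j)]
  have := hjmin x hx
  omega

include hjmin in
lemma alphaF_muF_lamF : alphaF (muF a b j) (lamF a b j) j = a := by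
  ext x
  simp only [alphaF_apply, muF_apply, lamF_apply]
  rcases lt_or_ge x j with h1 | h1
  · rw [if_pos h1, if_pos h1]
    have := hjmin x h1
    omega
  · rw [if_neg (by omega), if_neg (by omega)]
    have h2 : (x + 1) - 1 = x := by omega
    rw [h2]

lemma betaF_muF_lamF : betaF (muF a b j) (lamF a b j) j = b := by
  ext x
  simp only [betaF_apply, muF_apply, lamF_apply]
  rcases le_or_gt x j with h1 | h1
  · rw [if_pos h1, if_pos h1]
    omega
  · rw [if_neg (by omega), if_neg (by omega)]
    have h2 : (x - 1) + 1 = x := by omega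
    rw [h2]

end Psi

/-! ### weight bookkeeping -/

lemma range_split (i R : ℕ) (h : i ≤ R) (f : ℕ → ℕ) :
    ∑ x ∈ range R, f x = ∑ x ∈ range i, f x + ∑ x ∈ Ico i R, f x := by
  rw [Finset.range_eq_Ico, Finset.range_eq_Ico]
  exact (Finset.sum_Ico_consecutive f (Nat.zero_le i) h).symm

lemma sum_shift (f : ℕ → ℕ) (a c : ℕ) :
    ∑ x ∈ Ico a c, f (x+1) = ∑ x ∈ Ico (a+1) (c+1), f x := by
  rw [Finset.sum_Ico_eq_sum_range, Finset.sum_Ico_eq_sum_range]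
  have h : c + 1 - (a+1) = c - a := by omega
  rw [h]
  exact Finset.sum_congr rfl (fun k _ => by congr 1; omega)

lemma sum_pred (f : ℕ → ℕ) (s : Finset ℕ) (h : ∀ x ∈ s, 1 ≤ f x) :
    ∑ x ∈ s, (f x - 1) + s.card = ∑ x ∈ s, f x := by
  have h2 : ∑ x ∈ s, (f x - 1) + ∑ _x ∈ s, 1 = ∑ x ∈ s, ((f x - 1) + 1) :=
    (Finset.sum_add_distrib).symm
  rw [Finset.sum_const, smul_eq_mul, mul_one] at h2
  rw [h2]
  exact Finset.sum_congr rfl (fun x hx => by have := h x hx; omega)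

lemma wt_phi {mu lam : ℕ →₀ ℕ} {i : ℕ} (hmu : Antitone ⇑mu) (hv : lam i < mu i) :
    wt (alphaF mu lam i) + wt (betaF mu lam i) + 1 = wt mu + wt lam := by
  set R := bnd mu + bnd lam + i + 2 with hR
  have hmu0 : ∀ x, R - 1 ≤ x → mu x = 0 := fun x hx =>
    apply_eq_zero_of_bnd_le mu (by omega)
  have hlam0 : ∀ x, R - 1 ≤ x → lam x = 0 := fun x hx =>
    apply_eq_zero_of_bnd_le lam (by omega)
  have wA : wt (alphaF mu lam i) =
      ∑ x ∈ range i, (lam x + 1) + ∑ x ∈ Ico i R, mu (x+1) := by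
    rw [wt_eq_sum_range (f := alphaF mu lam i) (N := R) (fun x hx => by
      simp only [alphaF_apply]
      rw [if_neg (by omega)]
      exact apply_eq_zero_of_bnd_le mu (by omega))]
    rw [range_split i R (by omega)]
    congr 1
    · exact Finset.sum_congr rfl (fun x hx => by
        simp only [alphaF_apply]
        rw [if_pos (Finset.mem_range.mp hx)])
    · exact Finset.sum_congr rfl (fun x hx => by
        simp only [alphaF_apply]
        rw [if_neg (by have := (Finset.mem_Ico.mp hx).1; omega)])
  have wB : wt (betaF mu lam i) =
      ∑ x ∈ range (i+1), (mu x - 1) + ∑ x ∈ Ico (i+1) R, lam (x-1) := by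
    rw [wt_eq_sum_range (f := betaF mu lam i) (N := R) (fun x hx => by
      simp only [betaF_apply]
      rw [if_neg (by omega)]
      exact apply_eq_zero_of_bnd_le lam (by omega))]
    rw [range_split (i+1) R (by omega)]
    congr 1
    · exact Finset.sum_congr rfl (fun x hx => by
        simp only [betaF_apply]
        rw [if_pos (by have := Finset.mem_range.mp hx; omega)])
    · exact Finset.sum_congr rfl (fun x hx => by
        simp only [betaF_apply]
        rw [if_neg (by have := (Finset.mem_Ico.mp hx).1; omega)])
  have wM : wt mu = ∑ x ∈ range (i+1), mu x + ∑ x ∈ Ico (i+1) R, mu x := by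
    rw [wt_eq_sum_range (f := mu) (N := R) (fun x hx => hmu0 x (by omega)),
      range_split (i+1) R (by omega)]
  have wL : wt lam = ∑ x ∈ range i, lam x + ∑ x ∈ Ico i (R-1), lam x := by
    rw [wt_eq_sum_range (f := lam) (N := R - 1) (fun x hx => hlam0 x (by omega)),
      range_split i (R-1) (by omega)]
  -- transform the two Ico sums
  have e1 : ∑ x ∈ Ico i R, mu (x+1) = ∑ x ∈ Ico (i+1) R, mu x + mu R := by
    rw [sum_shift mu i R, Finset.sum_Ico_succ_top (by omega)]
  have e2 : ∑ x ∈ Ico (i+1) R, lam (x-1) = ∑ x ∈ Ico i (R-1), lam x := by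
    have h3 : R - 1 + 1 = R := by omega
    rw [show ∑ x ∈ Ico (i+1) R, lam (x-1)
        = ∑ x ∈ Ico (i+1) (R-1+1), (fun y => lam (y-1)) x by rw [h3]]
    rw [← sum_shift (fun y => lam (y-1)) i (R-1)]
    exact Finset.sum_congr rfl (fun x _ => by simp only [Nat.add_sub_cancel])
  have e3 : ∑ x ∈ range i, (lam x + 1) = ∑ x ∈ range i, lam x + i := by
    rw [Finset.sum_add_distrib, Finset.sum_const, smul_eq_mul, mul_one, card_range]
  have e4 : ∑ x ∈ range (i+1), (mu x - 1) + (i+1) = ∑ x ∈ range (i+1), mu x := by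
    have := sum_pred mu (range (i+1)) (fun x hx => by
      have h5 : mu x ≥ mu i := hmu (by have := Finset.mem_range.mp hx; omega)
      omega)
    rw [card_range] at this
    exact this
  have e5 : mu R = 0 := hmu0 R (by omega)
  rw [wA, wB, wM, wL, e1, e2, e3, e5]
  omega

/-! ### the bijection on counts -/

lemma nonnested_ex {mu lam : ℕ →₀ ℕ} (h : ¬ ∀ x, mu x ≤ lam x) : ∃ x, lam x < mu x := by
  push_neg at h
  exact h

lemma psi_ex (a b : ℕ →₀ ℕ) : ∃ x, a x ≤ b x + 1 :=
  ⟨bnd a, by rw [apply_eq_zero_of_bnd_le a (le_refl _)]; omega⟩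

lemma nn_eq_DN (m : ℕ) : nn (m+1) = DN m := by
  classical
  refine Nat.card_congr ?_
  refine
    { toFun := fun p => by
        refine ⟨(alphaF p.1.1 p.1.2 (Nat.find (nonnested_ex p.2.2.2.1)),
                 betaF p.1.1 p.1.2 (Nat.find (nonnested_ex p.2.2.2.1))), ?_, ?_, ?_⟩
        · exact antitone_alphaF p.2.1 p.2.2.1 (Nat.find_spec (nonnested_ex p.2.2.2.1))
            (fun x hx => by have := Nat.find_min (nonnested_ex p.2.2.2.1) hx; omega)
        · exact antitone_betaF p.2.1 p.2.2.1 (Nat.find_spec (nonnested_ex p.2.2.2.1))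
            (fun x hx => by have := Nat.find_min (nonnested_ex p.2.2.2.1) hx; omega)
        · show wt (alphaF p.1.1 p.1.2 (Nat.find (nonnested_ex p.2.2.2.1)))
            + wt (betaF p.1.1 p.1.2 (Nat.find (nonnested_ex p.2.2.2.1))) = m
          have hw := wt_phi p.2.1 (Nat.find_spec (nonnested_ex p.2.2.2.1))
          have h4 : wt p.1.1 + wt p.1.2 = m + 1 := p.2.2.2.2
          omega
      invFun := fun q => by
        refine ⟨(muF q.1.1 q.1.2 (Nat.find (psi_ex q.1.1 q.1.2)),
                 lamF q.1.1 q.1.2 (Nat.find (psi_ex q.1.1 q.1.2))), ?_, ?_, ?_, ?_⟩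
        · exact antitone_muF q.2.1 q.2.2.1 (Nat.find_spec (psi_ex q.1.1 q.1.2))
        · exact antitone_lamF q.2.1 q.2.2.1
            (fun x hx => by have := Nat.find_min (psi_ex q.1.1 q.1.2) hx; omega)
        · intro hall
          have h1 : muF q.1.1 q.1.2 (Nat.find (psi_ex q.1.1 q.1.2))
                (Nat.find (psi_ex q.1.1 q.1.2))
              ≤ lamF q.1.1 q.1.2 (Nat.find (psi_ex q.1.1 q.1.2))
                (Nat.find (psi_ex q.1.1 q.1.2)) := hall (Nat.find (psi_ex q.1.1 q.1.2))
          have h2 := psi_violation (a := q.1.1) (b := q.1.2)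
            (j := Nat.find (psi_ex q.1.1 q.1.2)) q.2.2.1
          omega
        · show wt (muF q.1.1 q.1.2 (Nat.find (psi_ex q.1.1 q.1.2)))
            + wt (lamF q.1.1 q.1.2 (Nat.find (psi_ex q.1.1 q.1.2))) = m + 1
          have hv2 := psi_violation (a := q.1.1) (b := q.1.2)
            (j := Nat.find (psi_ex q.1.1 q.1.2)) q.2.2.1
          have hmuA := antitone_muF q.2.1 q.2.2.1 (Nat.find_spec (psi_ex q.1.1 q.1.2))
          have hw := wt_phi hmuA hv2
          rw [alphaF_muF_lamF (fun x hx => by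
               have := Nat.find_min (psi_ex q.1.1 q.1.2) hx; omega),
             betaF_muF_lamF] at hw
          have h4 : wt q.1.1 + wt q.1.2 = m := q.2.2.2
          omega
      left_inv := ?_
      right_inv := ?_ }
  · rintro ⟨⟨mu, lam⟩, h1, h2, h3, h4⟩
    have hex : ∃ x, lam x < mu x := nonnested_ex h3
    have hv : lam (Nat.find hex) < mu (Nat.find hex) := Nat.find_spec hex
    have hmin : ∀ x, x < Nat.find hex → mu x ≤ lam x :=
      fun x hx => by have := Nat.find_min hex hx; omega
    have hjgen : ∀ (h' : ∃ x, alphaF mu lam (Nat.find hex) x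
        ≤ betaF mu lam (Nat.find hex) x + 1), Nat.find h' = Nat.find hex := by
      intro h'
      rw [Nat.find_eq_iff]
      exact ⟨phi_index_spec h1 hv, fun x hx => phi_index_min h1 hv hmin hx⟩
    apply Subtype.ext
    show (muF (alphaF mu lam (Nat.find hex)) (betaF mu lam (Nat.find hex)) _,
          lamF (alphaF mu lam (Nat.find hex)) (betaF mu lam (Nat.find hex)) _) = (mu, lam)
    rw [hjgen _, muF_alphaF_betaF h1 hv, lamF_alphaF_betaF]
  · rintro ⟨⟨a, b⟩, h1, h2, h3⟩
    have hex2 : ∃ x, a x ≤ b x + 1 := psi_ex a b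
    have hj : a (Nat.find hex2) ≤ b (Nat.find hex2) + 1 := Nat.find_spec hex2
    have hjmin : ∀ x, x < Nat.find hex2 → b x + 2 ≤ a x :=
      fun x hx => by have := Nat.find_min hex2 hx; omega
    have higen : ∀ (h' : ∃ x, lamF a b (Nat.find hex2) x < muF a b (Nat.find hex2) x),
        Nat.find h' = Nat.find hex2 := by
      intro h'
      rw [Nat.find_eq_iff]
      constructor
      · exact psi_violation h2
      · intro x hx hviol
        have := psi_nested_below (a := a) (b := b) hjmin hx
        omega
    apply Subtype.ext
    show (alphaF (muF a b (Nat.find hex2)) (lamF a b (Nat.find hex2)) _,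
          betaF (muF a b (Nat.find hex2)) (lamF a b (Nat.find hex2)) _) = (a, b)
    rw [higen _, alphaF_muF_lamF hjmin, betaF_muF_lamF]

lemma wt_eq_zero_apply {f : ℕ →₀ ℕ} (h : wt f = 0) (x : ℕ) : f x = 0 := by
  have := apply_le_wt f x
  omega

lemma cN_zero : cN 0 = DN 0 := by
  refine Nat.card_congr (Equiv.subtypeEquivRight (fun p => ?_))
  constructor
  · rintro ⟨h1, h2, h3, h4⟩; exact ⟨h1, h2, h4⟩
  · rintro ⟨h1, h2, h4⟩
    refine ⟨h1, h2, fun x => ?_, h4⟩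
    rw [wt_eq_zero_apply (f := p.1) (by omega) x]
    omega

lemma cN_succ (m : ℕ) : cN (m+1) + DN m = DN (m+1) := by
  rw [DN_split (m+1), nn_eq_DN]

end NestedGF

/-- **Generating function for nested pairs of partitions (Stanley, EC1 (1.128)).**
A partition is modelled as a finitely supported antitone function `ℕ →₀ ℕ` (its parts
`λ_0 ≥ λ_1 ≥ ⋯`, eventually `0`), of size `|λ| = ∑ λ_i`; `μ ≤ λ` means `μ_i ≤ λ_i` for
all `i` (containment of Young diagrams).  Let `E` be the Euler product `∏_{n≥1}(1 - qⁿ)`,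
characterised coefficientwise by its stabilising partial products.  The claim:
`∑_{μ ≤ λ} q^{|μ|+|λ|} = (1-q) ∏_{n≥1} (1-qⁿ)^{-2}`, i.e. for every `m` the number of
nested pairs `(μ, λ)` with `|μ| + |λ| = m` is the `m`-th coefficient of `(1-q)·E⁻²`. -/
theorem nested_partition_generating_function
    (E : PowerSeries ℚ)
    (hE : ∀ m, PowerSeries.coeff (R := ℚ) m E =
      PowerSeries.coeff (R := ℚ) m
        (∏ n ∈ Finset.range (m + 1), (1 - (PowerSeries.X : PowerSeries ℚ) ^ (n + 1))))
    (m : ℕ) :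
    (Nat.card {p : (ℕ →₀ ℕ) × (ℕ →₀ ℕ) //
        Antitone ⇑p.1 ∧ Antitone ⇑p.2 ∧ (∀ i, p.1 i ≤ p.2 i) ∧
        (p.1.sum fun _ v => v) + (p.2.sum fun _ v => v) = m} : ℚ)
      = PowerSeries.coeff (R := ℚ) m ((1 - PowerSeries.X) * (E⁻¹) ^ 2) := by
  classical
  have hL : (Nat.card {p : (ℕ →₀ ℕ) × (ℕ →₀ ℕ) //
        Antitone ⇑p.1 ∧ Antitone ⇑p.2 ∧ (∀ i, p.1 i ≤ p.2 i) ∧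
        (p.1.sum fun _ v => v) + (p.2.sum fun _ v => v) = m} : ℚ) = (NestedGF.cN m : ℚ) := rfl
  have h0 : PowerSeries.constantCoeff (R := ℚ) E ≠ 0 := by
    have h00 := hE 0
    rw [Finset.prod_range_one] at h00
    have h01 : PowerSeries.coeff (R := ℚ) 0 E = 1 := by
      rw [h00, map_sub, PowerSeries.coeff_one, PowerSeries.coeff_X_pow]
      norm_num
    rw [← PowerSeries.coeff_zero_eq_constantCoeff_apply, h01]
    norm_num
  have hinv : E⁻¹ = NestedGF.Pser :=
    ((PowerSeries.eq_inv_iff_mul_eq_one h0).mpr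
      (by rw [mul_comm]; exact NestedGF.E_mul_Pser E hE)).symm
  rw [hL, hinv, sub_mul, one_mul, map_sub]
  have hx : PowerSeries.coeff (R := ℚ) m (PowerSeries.X * NestedGF.Pser ^ 2)
      = if 1 ≤ m then (NestedGF.DN (m-1) : ℚ) else 0 := by
    rw [show (PowerSeries.X : PowerSeries ℚ) * NestedGF.Pser ^ 2
        = NestedGF.Pser ^ 2 * PowerSeries.X ^ 1 by ring]
    rw [PowerSeries.coeff_mul_X_pow']
    split
    · rw [NestedGF.coeff_Pser_sq]
    · rfl
  rw [hx, NestedGF.coeff_Pser_sq]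
  cases m with
  | zero =>
    rw [if_neg (by omega)]
    rw [NestedGF.cN_zero]
    ring
  | succ k =>
    rw [if_pos (by omega)]
    have h5 : (NestedGF.cN (k+1) : ℚ) + (NestedGF.DN k : ℚ) = (NestedGF.DN (k+1) : ℚ) := by
      exact_mod_cast NestedGF.cN_succ k
    simp only [Nat.add_sub_cancel]
    linarith
end

section
/- Under the spectral correspondence between $\mathcal{L}$-Higgs pairs $(E,\phi)$ on $S$ and compactly supported sheaves $\mathcal{E}_\phi$ on $X = \mathrm{Tot}(\mathcal{L})$, Gieseker (semi)stability of $(E,\phi)$ with respect to $\mathcal{O}_S(1)$ is equivalent to Gieseker (semi)stability of $\mathcal{E}_\phi$ with respect to $\pi^*\mathcal{O}_S(1)$. -/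
/-- **Gieseker stability matches under the spectral construction.**
Under the spectral correspondence, `φ`-invariant subsheaves `F ⊂ E` on `S` correspond
bijectively (via `corr`) to subsheaves `𝓕 ⊂ 𝓔_φ` on `X = Tot(𝓛)`; moreover Hilbert
polynomials are preserved, `χ(E(n)) = χ(𝓔_φ(n))` and `χ(F(n)) = χ(corr F(n))`, while the
leading Hilbert coefficient satisfies `r(𝓕) = κ · rk(F)` for the fixed positive constant
`κ = ∫_S h²`.  Gieseker (semi)stability is the comparison of reduced Hilbert polynomials
for `n ≫ 0`; with positive ranks this is the comparison of `χ_F(n) · r_E` with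
`χ_E(n) · r_F`.  The claim: `(E, φ)` is Gieseker stable (resp. semistable) w.r.t. `O_S(1)`
iff `𝓔_φ` is Gieseker stable (resp. semistable) w.r.t. `π^* O_S(1)`. -/
theorem spectral_construction_preserves_stability
    (SubE SubX : Type*) (corr : SubE ≃ SubX)
    (hilbE : ℕ → ℚ) (rE : ℚ) (hilbX : ℕ → ℚ) (rX : ℚ)
    (hilbSubE : SubE → ℕ → ℚ) (rSubE : SubE → ℚ)
    (hilbSubX : SubX → ℕ → ℚ) (rSubX : SubX → ℚ)
    (κ : ℚ) (hκ : 0 < κ)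
    (hrE : 0 < rE) (hrX : rX = κ * rE)
    (hrSubE : ∀ F, 0 < rSubE F)
    (hhilb : ∀ n, hilbX n = hilbE n)
    (hsubHilb : ∀ F n, hilbSubX (corr F) n = hilbSubE F n)
    (hsubr : ∀ F, rSubX (corr F) = κ * rSubE F) :
    ((∀ F, ∀ᶠ n in Filter.atTop, hilbSubE F n * rE < hilbE n * rSubE F) ↔
      (∀ G, ∀ᶠ n in Filter.atTop, hilbSubX G n * rX < hilbX n * rSubX G)) ∧
    ((∀ F, ∀ᶠ n in Filter.atTop, hilbSubE F n * rE ≤ hilbE n * rSubE F) ↔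
      (∀ G, ∀ᶠ n in Filter.atTop, hilbSubX G n * rX ≤ hilbX n * rSubX G)) := by
  have key : ∀ F n, (hilbSubX (corr F) n * rX < hilbX n * rSubX (corr F) ↔
      hilbSubE F n * rE < hilbE n * rSubE F) ∧
      (hilbSubX (corr F) n * rX ≤ hilbX n * rSubX (corr F) ↔
      hilbSubE F n * rE ≤ hilbE n * rSubE F) := by
    intro F n
    rw [hsubHilb, hhilb, hsubr, hrX]
    constructor
    · rw [show hilbSubE F n * (κ * rE) = κ * (hilbSubE F n * rE) by ring,
        show hilbE n * (κ * rSubE F) = κ * (hilbE n * rSubE F) by ring]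
      exact mul_lt_mul_iff_right₀ hκ
    · rw [show hilbSubE F n * (κ * rE) = κ * (hilbSubE F n * rE) by ring,
        show hilbE n * (κ * rSubE F) = κ * (hilbE n * rSubE F) by ring]
      exact mul_le_mul_iff_right₀ hκ
  constructor
  · constructor
    · intro h G
      have := h (corr.symm G)
      filter_upwards [this] with n hn
      have := (key (corr.symm G) n).1
      rw [corr.apply_symm_apply] at this
      exact this.mpr hn
    · intro h F
      filter_upwards [h (corr F)] with n hn
      exact (key F n).1.mp hn
  · constructor
    · intro h G
      have := h (corr.symm G)
      filter_upwards [this] with n hn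
      have := (key (corr.symm G) n).2
      rw [corr.apply_symm_apply] at this
      exact this.mpr hn
    · intro h F
      filter_upwards [h (corr F)] with n hn
      exact (key F n).2.mp hn
end
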